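/- Let α≥0 and f∈M_σ(α,φ): f bi-univalent on 𝔻 with (1−α)zf'(z)/f(z)+α(1+zf''(z)/f'(z)) ≺ φ(z), and the same subordination for g=f⁻¹, where φ(z)=1+B₁z+B₂z²+⋯ with B₁>0 and B₁²+(1+α)(B₁−B₂)≠0. Then |a₂| ≤ B₁√B₁ / √((1+α)|B₁²+(1+α)(B₁−B₂)|). -/

import Mathlib

/-!
Write `a₂, a₃` for the Taylor coefficients of `f` and `c₁, c₂`, `d₁, d₂` for those of the Schwarz
functions `u`, `v`. Comparing coefficients in the two subordinations, with `b₂ = -a₂` and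
`b₃ = 2a₂² - a₃` for the inverse `g`, gives `(1+α)a₂ = B₁c₁ = -B₁d₁` and, after adding the two
second-order relations, `2(1+α)(B₁² - (1+α)B₂)a₂² = B₁³(c₂ + d₂)`. Schwarz–Pick applied to `u(z)/z`
gives `|c₂| ≤ 1 - |c₁|²`, likewise `|d₂| ≤ 1 - |c₁|²`, and since `|c₁| = (1+α)|a₂|/B₁` the term
`-|c₁|²` absorbs the gap between `|B₁² + (1+α)(B₁ - B₂)|` and `|B₁² - (1+α)B₂|`.
-/

open Metric Complex Filter Topology

/-- n-th Taylor coefficient of `f` at `0`. -/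
noncomputable def tc (f : ℂ → ℂ) (n : ℕ) : ℂ := iteratedDeriv n f 0 / n.factorial

open Set ComplexConjugate

attribute [local fun_prop] AnalyticAt.contDiffAt

lemma tc_zero (f : ℂ → ℂ) : tc f 0 = f 0 := by simp [tc]

lemma tc_one (f : ℂ → ℂ) : tc f 1 = deriv f 0 := by simp [tc]

lemma tc_two (f : ℂ → ℂ) : tc f 2 = iteratedDeriv 2 f 0 / 2 := by simp [tc, Nat.factorial]

lemma tc_three (f : ℂ → ℂ) : tc f 3 = iteratedDeriv 3 f 0 / 6 := by simp [tc, Nat.factorial]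

section Calculus

variable {𝕜 : Type*} [NontriviallyNormedField 𝕜] [CompleteSpace 𝕜] {ψ u : 𝕜 → 𝕜} {x : 𝕜}

lemma deriv_comp_eventuallyEq (hψ : AnalyticAt 𝕜 ψ (u x)) (hu : AnalyticAt 𝕜 u x) :
    deriv (fun z => ψ (u z)) =ᶠ[𝓝 x] fun z => deriv ψ (u z) * deriv u z := by
  filter_upwards [hu.eventually_analyticAt, hu.continuousAt.eventually hψ.eventually_analyticAt]
    with y huy hψy
  exact deriv_comp y hψy.differentiableAt huy.differentiableAt

lemma iteratedDeriv_two_comp (hψ : AnalyticAt 𝕜 ψ (u x)) (hu : AnalyticAt 𝕜 u x) :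
    iteratedDeriv 2 (fun z => ψ (u z)) x =
      iteratedDeriv 2 ψ (u x) * deriv u x ^ 2 + deriv ψ (u x) * iteratedDeriv 2 u x := by
  have hψ' : AnalyticAt 𝕜 (fun z => deriv ψ (u z)) x := hψ.deriv.comp hu
  rw [iteratedDeriv_succ', (deriv_comp_eventuallyEq hψ hu).iteratedDeriv_eq,
    iteratedDeriv_fun_mul (by fun_prop) (by fun_prop)]
  simp only [Nat.reduceAdd, Finset.sum_range_succ, Finset.range_one, Finset.sum_singleton,
    Nat.choose_succ_self_right, zero_add, Nat.cast_one, iteratedDeriv_zero, one_mul, tsub_zero,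
    iteratedDeriv_succ', Nat.choose_self, (deriv_comp_eventuallyEq hψ.deriv hu).eq_of_nhds,
    tsub_self]
  ring

lemma iteratedDeriv_three_comp (hψ : AnalyticAt 𝕜 ψ (u x)) (hu : AnalyticAt 𝕜 u x) :
    iteratedDeriv 3 (fun z => ψ (u z)) x =
      iteratedDeriv 3 ψ (u x) * deriv u x ^ 3
        + 3 * iteratedDeriv 2 ψ (u x) * deriv u x * iteratedDeriv 2 u x
        + deriv ψ (u x) * iteratedDeriv 3 u x := by
  have hψ' : AnalyticAt 𝕜 (fun z => deriv ψ (u z)) x := hψ.deriv.comp hu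
  rw [iteratedDeriv_succ', (deriv_comp_eventuallyEq hψ hu).iteratedDeriv_eq,
    iteratedDeriv_fun_mul (by fun_prop) (by fun_prop)]
  simp only [Nat.reduceAdd, Finset.sum_range_succ, Finset.range_one, Finset.sum_singleton,
    Nat.choose_zero_right, Nat.cast_one, iteratedDeriv_zero, one_mul, tsub_zero,
    iteratedDeriv_succ', Nat.choose_succ_self_right, Nat.cast_ofNat, (deriv_comp_eventuallyEq hψ.deriv hu).eq_of_nhds,
    Nat.add_one_sub_one, Nat.choose_self, iteratedDeriv_two_comp hψ.deriv hu, tsub_self]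
  ring

end Calculus

theorem tc_of_leftInverse {f g : ℂ → ℂ} (hf : AnalyticAt ℂ f 0) (hg : AnalyticAt ℂ g 0)
    (hf0 : f 0 = 0) (hf1 : deriv f 0 = 1) (hgf : ∀ᶠ z in 𝓝 0, g (f z) = z) :
    g 0 = 0 ∧ deriv g 0 = 1 ∧ tc g 2 = -tc f 2 ∧ tc g 3 = 2 * tc f 2 ^ 2 - tc f 3 := by
  have hg0 : g 0 = 0 := by simpa [hf0] using hgf.self_of_nhds
  rw [← hf0] at hg
  replace hgf : (fun z => g (f z)) =ᶠ[𝓝 0] fun z => z := hgf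
  have h₁ : deriv g 0 = 1 := by
    simpa [(deriv_comp_eventuallyEq hg hf).eq_of_nhds, hf0, hf1] using hgf.deriv_eq
  have h₂ : iteratedDeriv 2 g 0 + iteratedDeriv 2 f 0 = 0 := by
    simpa [iteratedDeriv_two_comp hg hf, iteratedDeriv_fun_id_zero, hf0, hf1, h₁]
      using hgf.iteratedDeriv_eq 2
  have h₃ : iteratedDeriv 3 g 0 + 3 * iteratedDeriv 2 g 0 * iteratedDeriv 2 f 0
      + iteratedDeriv 3 f 0 = 0 := by
    simpa [iteratedDeriv_three_comp hg hf, iteratedDeriv_fun_id_zero, hf0, hf1, h₁]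
      using hgf.iteratedDeriv_eq 3
  refine ⟨hg0, h₁, ?_, ?_⟩ <;> simp only [tc_two, tc_three]
  · linear_combination h₂ / 2
  · linear_combination h₃ / 6 - iteratedDeriv 2 f 0 * h₂ / 2

section Subordination

variable {f u φ : ℂ → ℂ} {α : ℂ}

lemma eventuallyEq_cleared_of_subordination (hf : AnalyticAt ℂ f 0) (hf0 : f 0 = 0)
    (hf1 : deriv f 0 = 1)
    (h : ∀ᶠ z in 𝓝[≠] 0, (1 - α) * (z * deriv f z / f z)
        + α * (1 + z * iteratedDeriv 2 f z / deriv f z) = φ (u z)) :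
    (fun z => (1 - α) * (z * (deriv f z * deriv f z)) + α * (f z * deriv f z)
        + α * (z * (f z * deriv (deriv f) z))) =ᶠ[𝓝 0] fun z => φ (u z) * (f z * deriv f z) := by
  have hfne : ∀ᶠ z in 𝓝[≠] 0, f z ≠ 0 :=
    hf.differentiableAt.hasDerivAt.eventually_ne (by simp [hf1])
  have hf'ne : ∀ᶠ z in 𝓝 0, deriv f z ≠ 0 :=
    hf.deriv.continuousAt.eventually_ne (by simp [hf1])
  filter_upwards [eventually_nhdsWithin_iff.1 (h.and hfne), hf'ne] with z hz hf'z
  rcases eq_or_ne z 0 with rfl | hz0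
  · simp [hf0]
  · obtain ⟨hsub, hfz⟩ := hz hz0
    rw [iteratedDeriv_succ, iteratedDeriv_one] at hsub
    field_simp at hsub
    linear_combination hsub

theorem tc_relations_of_subordination (hf : AnalyticAt ℂ f 0) (hu : AnalyticAt ℂ u 0)
    (hφ : AnalyticAt ℂ φ 0) (hf0 : f 0 = 0) (hf1 : deriv f 0 = 1) (hu0 : u 0 = 0) (hφ0 : φ 0 = 1)
    (h : ∀ᶠ z in 𝓝[≠] 0, (1 - α) * (z * deriv f z / f z)
        + α * (1 + z * iteratedDeriv 2 f z / deriv f z) = φ (u z)) :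
    (1 + α) * tc f 2 = tc φ 1 * tc u 1 ∧
      2 * (1 + 2 * α) * tc f 3 - (1 + 3 * α) * tc f 2 ^ 2
        = tc φ 1 * tc u 2 + tc φ 2 * tc u 1 ^ 2 := by
  rw [← hu0] at hφ
  have hφu : AnalyticAt ℂ (fun z => φ (u z)) 0 := hφ.comp hu
  have hpoly := eventuallyEq_cleared_of_subordination hf hf0 hf1 h
  have h₂ := hpoly.iteratedDeriv_eq 2
  have h₃ := hpoly.iteratedDeriv_eq 3
  simp (disch := fun_prop) only [iteratedDeriv_fun_add, iteratedDeriv_const_mul_field,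
    iteratedDeriv_fun_mul] at h₂ h₃
  simp only [Nat.reduceAdd, iteratedDeriv_fun_id_zero, mul_ite, mul_one, mul_zero,
    Finset.sum_range_succ, Nat.choose_self, Nat.cast_one, one_mul, tsub_self, iteratedDeriv_zero,
    hf1, ite_mul, zero_mul, Finset.sum_ite_eq', Finset.mem_range, Nat.one_lt_ofNat, ↓reduceIte,
    Nat.choose_succ_self_right, Nat.cast_ofNat, Nat.add_one_sub_one, Finset.range_one,
    Finset.sum_singleton, zero_add, tsub_zero, iteratedDeriv_succ', Nat.choose_zero_right, hf0, hu0,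
    hφ0, (deriv_comp_eventuallyEq hφ hu).eq_of_nhds, iteratedDeriv_two_comp hφ hu,
    Finset.range_zero, zero_tsub, Finset.sum_empty, add_zero, Nat.choose_one_right,
    Nat.reduceSub] at h₂ h₃
  simp only [tc_one, tc_two, tc_three, iteratedDeriv_succ', iteratedDeriv_zero]
  constructor
  · linear_combination h₂ / 2
  · linear_combination h₃ / 6 - 3 * deriv (deriv f) 0 * h₂ / 4

end Subordination

section SchwarzPick

noncomputable def blaschkeFactor (a w : ℂ) : ℂ := (w - a) / (1 - conj a * w)

variable {a w : ℂ}

lemma normSq_one_sub_conj_mul_sub_normSq_sub (a w : ℂ) :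
    normSq (1 - conj a * w) - normSq (w - a) = (1 - normSq a) * (1 - normSq w) := by
  simp only [normSq_apply, sub_re, sub_im, mul_re, mul_im, one_re, one_im, conj_re, conj_im]
  ring

lemma one_sub_conj_mul_ne_zero (ha : ‖a‖ < 1) (hw : ‖w‖ < 1) : 1 - conj a * w ≠ 0 := by
  refine sub_ne_zero.2 (ne_of_apply_ne norm ?_)
  rw [norm_one, norm_mul, Complex.norm_conj]
  exact (mul_lt_one_of_nonneg_of_lt_one_left (norm_nonneg _) ha hw.le).ne'

lemma norm_blaschkeFactor_lt_one (ha : ‖a‖ < 1) (hw : ‖w‖ < 1) :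
    ‖blaschkeFactor a w‖ < 1 := by
  have key := normSq_one_sub_conj_mul_sub_normSq_sub a w
  simp only [normSq_eq_norm_sq] at key
  have hlt : ‖w - a‖ < ‖1 - conj a * w‖ := by
    refine lt_of_pow_lt_pow_left₀ 2 (norm_nonneg _) ?_
    nlinarith [mul_pos (sub_pos.2 (pow_lt_one₀ (norm_nonneg a) ha two_ne_zero))
      (sub_pos.2 (pow_lt_one₀ (norm_nonneg w) hw two_ne_zero))]
  rw [blaschkeFactor, norm_div, div_lt_one ((norm_nonneg _).trans_lt hlt)]
  exact hlt

lemma blaschkeFactor_self : blaschkeFactor a a = 0 := by simp [blaschkeFactor]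

lemma hasDerivAt_blaschkeFactor (ha : ‖a‖ < 1) (hw : ‖w‖ < 1) :
    HasDerivAt (blaschkeFactor a) ((1 - ‖a‖ ^ 2) / (1 - conj a * w) ^ 2) w := by
  refine (((hasDerivAt_id w).sub_const a).div (((hasDerivAt_id w).const_mul (conj a)).const_sub 1)
    (one_sub_conj_mul_ne_zero ha hw)).congr_deriv ?_
  rw [← conj_mul']
  simp only [id]
  ring

theorem norm_deriv_le_one_sub_sq_of_mapsTo_ball {h : ℂ → ℂ}
    (hd : DifferentiableOn ℂ h (ball 0 1)) (hmaps : MapsTo h (ball 0 1) (ball 0 1)) :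
    ‖deriv h 0‖ ≤ 1 - ‖h 0‖ ^ 2 := by
  have hball : ∀ z ∈ ball (0 : ℂ) 1, ‖h z‖ < 1 := fun z hz => mem_ball_zero_iff.1 (hmaps hz)
  set a := h 0
  have ha : ‖a‖ < 1 := hball 0 (mem_ball_self one_pos)
  have hr : (0 : ℝ) < 1 - ‖a‖ ^ 2 := by nlinarith [norm_nonneg a]
  have hcomp : DifferentiableOn ℂ (blaschkeFactor a ∘ h) (ball 0 1) := fun z hz =>
    ((hasDerivAt_blaschkeFactor ha (hball z hz)).differentiableAt.comp z
      (hd.differentiableAt (isOpen_ball.mem_nhds hz))).differentiableWithinAt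
  have hschwarz := Complex.norm_deriv_le_one_of_mapsTo_ball hcomp
    (fun z hz => by
      simpa [blaschkeFactor_self, a] using (norm_blaschkeFactor_lt_one ha (hball z hz)).le)
    one_pos
  have hchain : deriv (blaschkeFactor a ∘ h) 0 = deriv h 0 / ((1 - ‖a‖ ^ 2 : ℝ) : ℂ) := by
    rw [((hasDerivAt_blaschkeFactor ha ha).comp 0 (hd.differentiableAt
      (ball_mem_nhds 0 one_pos)).hasDerivAt).deriv, conj_mul']
    have : ((1 - ‖a‖ ^ 2 : ℝ) : ℂ) ≠ 0 := ofReal_ne_zero.2 hr.ne'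
    push_cast at this ⊢
    field_simp
  rwa [hchain, norm_div, norm_real, Real.norm_of_nonneg hr.le, div_le_one hr] at hschwarz

theorem norm_deriv_le_one_sub_sq {h : ℂ → ℂ} (hd : DifferentiableOn ℂ h (ball 0 1))
    (hmaps : MapsTo h (ball 0 1) (closedBall 0 1)) : ‖deriv h 0‖ ≤ 1 - ‖h 0‖ ^ 2 := by
  by_cases hopen : MapsTo h (ball 0 1) (ball 0 1)
  · exact norm_deriv_le_one_sub_sq_of_mapsTo_ball hd hopen
  obtain ⟨z₀, hz₀, hz₀norm⟩ : ∃ z₀ ∈ ball (0 : ℂ) 1, ‖h z₀‖ = 1 := by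
    simp only [MapsTo, not_forall, mem_ball_zero_iff] at hopen
    obtain ⟨z₀, hz₀, hlt⟩ := hopen
    exact ⟨z₀, mem_ball_zero_iff.2 hz₀,
      le_antisymm (mem_closedBall_zero_iff.1 (hmaps (mem_ball_zero_iff.2 hz₀))) (not_lt.1 hlt)⟩
  have hconst := Complex.eqOn_of_isPreconnected_of_isMaxOn_norm (convex_ball 0 1).isPreconnected
    isOpen_ball hd hz₀ fun z hz => show ‖h z‖ ≤ ‖h z₀‖ from
      hz₀norm ▸ mem_closedBall_zero_iff.1 (hmaps hz)
  rw [(eventuallyEq_of_mem (ball_mem_nhds 0 one_pos) hconst).deriv_eq,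
    hconst (mem_ball_self one_pos)]
  have hderiv : deriv (Function.const ℂ (h z₀)) 0 = 0 := deriv_const 0 (h z₀)
  simp [hderiv, hz₀norm]

lemma tc_succ_id_mul {h : ℂ → ℂ} (hh : AnalyticAt ℂ h 0) (n : ℕ) :
    tc (fun z => z * h z) (n + 1) = tc h n := by
  rw [tc, tc, iteratedDeriv_fun_mul (by fun_prop) (by fun_prop), Finset.sum_eq_single 1]
  · simp only [Nat.choose_one_right, Nat.cast_add, Nat.cast_one, iteratedDeriv_fun_id_zero,
      ↓reduceIte, mul_one, add_tsub_cancel_right, Nat.factorial_succ, Nat.cast_mul]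
    field_simp
  · intro i _ hi
    simp [iteratedDeriv_fun_id_zero, hi]
  · simp

theorem norm_tc_two_le {u : ℂ → ℂ} (hd : DifferentiableOn ℂ u (ball 0 1))
    (hmaps : MapsTo u (ball 0 1) (ball 0 1)) (hu0 : u 0 = 0) : ‖tc u 2‖ ≤ 1 - ‖tc u 1‖ ^ 2 := by
  have hdslope : DifferentiableOn ℂ (dslope u 0) (ball 0 1) :=
    (differentiableOn_dslope (ball_mem_nhds 0 one_pos)).2 hd
  have hu : u = fun z => z * dslope u 0 z := by
    funext z
    simpa [hu0] using (sub_smul_dslope u 0 z).symm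
  have hanalytic := hdslope.analyticAt (ball_mem_nhds 0 one_pos)
  rw [hu, tc_succ_id_mul hanalytic, tc_succ_id_mul hanalytic, tc_one, tc_zero]
  refine norm_deriv_le_one_sub_sq hdslope fun z hz => ?_
  simpa [hu0] using Complex.norm_dslope_le_div_of_mapsTo_ball hd
    (by simpa [hu0] using hmaps.mono_right ball_subset_closedBall) hz

end SchwarzPick

section Estimate

variable {α B₁ B₂ : ℝ} {a c₁ c₂ d₂ : ℂ}

lemma mul_sq_norm_le_of_coeff_relations (hα : 0 ≤ α) (hB₁ : 0 < B₁)
    (h₁ : (1 + α) * a = B₁ * c₁)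
    (h₂ : 2 * (1 + α) * (B₁ ^ 2 - (1 + α) * B₂) * a ^ 2 = B₁ ^ 3 * (c₂ + d₂))
    (hc₂ : ‖c₂‖ ≤ 1 - ‖c₁‖ ^ 2) (hd₂ : ‖d₂‖ ≤ 1 - ‖c₁‖ ^ 2) :
    (1 + α) * |B₁ ^ 2 + (1 + α) * (B₁ - B₂)| * ‖a‖ ^ 2 ≤ B₁ ^ 3 := by
  have hα' : 0 ≤ 1 + α := by linarith
  have hn₁ : (1 + α) * ‖a‖ = B₁ * ‖c₁‖ := by
    have := congrArg norm h₁
    rwa [← ofReal_one, ← ofReal_add, norm_mul, norm_mul, norm_real, norm_real,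
      Real.norm_of_nonneg hα', Real.norm_of_nonneg hB₁.le] at this
  have hn₂ : 2 * (1 + α) * |B₁ ^ 2 - (1 + α) * B₂| * ‖a‖ ^ 2 = B₁ ^ 3 * ‖c₂ + d₂‖ := by
    have := congrArg norm (show ((2 * (1 + α) * (B₁ ^ 2 - (1 + α) * B₂) : ℝ) : ℂ) * a ^ 2
      = ((B₁ ^ 3 : ℝ) : ℂ) * (c₂ + d₂) by push_cast; exact h₂)
    rwa [norm_mul, norm_mul, norm_real, norm_real, norm_pow, Real.norm_eq_abs, Real.norm_eq_abs,
      abs_mul, abs_mul, abs_two, abs_of_nonneg hα', abs_of_pos (pow_pos hB₁ 3)] at this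
  calc (1 + α) * |B₁ ^ 2 + (1 + α) * (B₁ - B₂)| * ‖a‖ ^ 2
      ≤ (1 + α) * (|B₁ ^ 2 - (1 + α) * B₂| + (1 + α) * B₁) * ‖a‖ ^ 2 := by
        gcongr
        calc |B₁ ^ 2 + (1 + α) * (B₁ - B₂)| = |(B₁ ^ 2 - (1 + α) * B₂) + (1 + α) * B₁| := by
              ring_nf
          _ ≤ _ := (abs_add_le _ _).trans_eq (by rw [abs_of_nonneg (mul_nonneg hα' hB₁.le)])
    _ = B₁ ^ 3 * (‖c₂ + d₂‖ / 2) + B₁ * ((1 + α) * ‖a‖) ^ 2 := by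
        rw [mul_div_assoc', ← hn₂]; ring
    _ ≤ B₁ ^ 3 * (1 - ‖c₁‖ ^ 2) + B₁ * (B₁ * ‖c₁‖) ^ 2 := by
        rw [hn₁]
        gcongr
        linarith [norm_add_le c₂ d₂]
    _ = B₁ ^ 3 := by ring

theorem norm_le_of_coeff_relations (hα : 0 ≤ α) (hB₁ : 0 < B₁)
    (hne : B₁ ^ 2 + (1 + α) * (B₁ - B₂) ≠ 0) (h₁ : (1 + α) * a = B₁ * c₁)
    (h₂ : 2 * (1 + α) * (B₁ ^ 2 - (1 + α) * B₂) * a ^ 2 = B₁ ^ 3 * (c₂ + d₂))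
    (hc₂ : ‖c₂‖ ≤ 1 - ‖c₁‖ ^ 2) (hd₂ : ‖d₂‖ ≤ 1 - ‖c₁‖ ^ 2) :
    ‖a‖ ≤ B₁ * √B₁ / √((1 + α) * |B₁ ^ 2 + (1 + α) * (B₁ - B₂)|) := by
  have hX : 0 < (1 + α) * |B₁ ^ 2 + (1 + α) * (B₁ - B₂)| :=
    mul_pos (by linarith) (abs_pos.2 hne)
  rw [le_div_iff₀ (Real.sqrt_pos.2 hX), ← Real.sqrt_sq (norm_nonneg a),
    ← Real.sqrt_mul (sq_nonneg _), ← Real.sqrt_sq hB₁.le, ← Real.sqrt_mul (sq_nonneg _),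
    Real.sqrt_sq hB₁.le]
  refine Real.sqrt_le_sqrt ?_
  nlinarith [mul_sq_norm_le_of_coeff_relations hα hB₁ h₁ h₂ hc₂ hd₂]

end Estimate

theorem stmt14_general (f g u v φ : ℂ → ℂ) (α B₁ B₂ : ℝ) (hα : 0 ≤ α)
    (hf : AnalyticOn ℂ f (ball (0:ℂ) 1))
    (hf0 : f 0 = 0) (hf1 : deriv f 0 = 1)
    (hg : AnalyticOn ℂ g (ball (0:ℂ) 1))
    (hinv : ∀ᶠ z in 𝓝 (0:ℂ), g (f z) = z)
    (hu : AnalyticOn ℂ u (ball (0:ℂ) 1)) (humap : ∀ z ∈ ball (0:ℂ) 1, u z ∈ ball (0:ℂ) 1) (hu0 : u 0 = 0)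
    (hv : AnalyticOn ℂ v (ball (0:ℂ) 1)) (hvmap : ∀ w ∈ ball (0:ℂ) 1, v w ∈ ball (0:ℂ) 1) (hv0 : v 0 = 0)
    (hφ : AnalyticOn ℂ φ (ball (0:ℂ) 1)) (hφ0 : φ 0 = 1)
    (hB₁ : tc φ 1 = (B₁ : ℂ)) (hB₂ : tc φ 2 = (B₂ : ℂ)) (hB₁pos : 0 < B₁)
    (hfu : ∀ z ∈ ball (0:ℂ) 1, z ≠ 0 →
      (1 - (α : ℂ)) * (z * deriv f z / f z)
        + (α : ℂ) * (1 + z * iteratedDeriv 2 f z / deriv f z) = φ (u z))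
    (hgv : ∀ w ∈ ball (0:ℂ) 1, w ≠ 0 →
      (1 - (α : ℂ)) * (w * deriv g w / g w)
        + (α : ℂ) * (1 + w * iteratedDeriv 2 g w / deriv g w) = φ (v w))
    (hne : B₁ ^ 2 + (1 + α) * (B₁ - B₂) ≠ 0) :
    ‖tc f 2‖ ≤ B₁ * Real.sqrt B₁ /
      Real.sqrt ((1 + α) * |B₁ ^ 2 + (1 + α) * (B₁ - B₂)|) := by
  have h0 : ball (0 : ℂ) 1 ∈ 𝓝 0 := ball_mem_nhds 0 one_pos
  obtain ⟨hg0, hg1, hb₂, hb₃⟩ :=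
    tc_of_leftInverse (hf.analyticAt h0) (hg.analyticAt h0) hf0 hf1 hinv
  obtain ⟨hc₁, hc₂⟩ := tc_relations_of_subordination (hf.analyticAt h0)
    (hu.analyticAt h0) (hφ.analyticAt h0) hf0 hf1 hu0 hφ0
    (eventually_nhdsWithin_iff.2 (mem_of_superset h0 hfu))
  obtain ⟨hd₁, hd₂⟩ := tc_relations_of_subordination (hg.analyticAt h0)
    (hv.analyticAt h0) (hφ.analyticAt h0) hg0 hg1 hv0 hφ0
    (eventually_nhdsWithin_iff.2 (mem_of_superset h0 hgv))
  simp only [hB₁, hB₂, hb₂, hb₃] at hc₁ hc₂ hd₁ hd₂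
  have hv₁ : tc v 1 = -tc u 1 :=
    mul_left_cancel₀ (ofReal_ne_zero.2 hB₁pos.ne') (by linear_combination -hd₁ - hc₁)
  rw [hv₁] at hd₂
  refine norm_le_of_coeff_relations hα hB₁pos hne hc₁ ?_
    (norm_tc_two_le hu.differentiableOn humap hu0)
    ((norm_tc_two_le hv.differentiableOn hvmap hv0).trans_eq (by rw [hv₁, norm_neg]))
  linear_combination (B₁ : ℂ) ^ 2 * (hc₂ + hd₂) - 2 * B₂ * (B₁ * tc u 1 + (1 + α) * tc f 2) * hc₁

theorem stmt14 (f g u v φ : ℂ → ℂ) (α B₁ B₂ : ℝ) (hα : 0 ≤ α)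
    (hf : AnalyticOn ℂ f (ball (0:ℂ) 1)) (hfinj : Set.InjOn f (ball (0:ℂ) 1))
    (hf0 : f 0 = 0) (hf1 : deriv f 0 = 1)
    (hg : AnalyticOn ℂ g (ball (0:ℂ) 1)) (hginj : Set.InjOn g (ball (0:ℂ) 1))
    (hinv : ∀ᶠ z in 𝓝 (0:ℂ), g (f z) = z)
    (hu : AnalyticOn ℂ u (ball (0:ℂ) 1)) (humap : ∀ z ∈ ball (0:ℂ) 1, u z ∈ ball (0:ℂ) 1) (hu0 : u 0 = 0)
    (hv : AnalyticOn ℂ v (ball (0:ℂ) 1)) (hvmap : ∀ w ∈ ball (0:ℂ) 1, v w ∈ ball (0:ℂ) 1) (hv0 : v 0 = 0)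
    (hφ : AnalyticOn ℂ φ (ball (0:ℂ) 1)) (hφ0 : φ 0 = 1)
    (hB₁ : tc φ 1 = (B₁ : ℂ)) (hB₂ : tc φ 2 = (B₂ : ℂ)) (hB₁pos : 0 < B₁)
    (hfu : ∀ z ∈ ball (0:ℂ) 1, z ≠ 0 →
      (1 - (α : ℂ)) * (z * deriv f z / f z)
        + (α : ℂ) * (1 + z * iteratedDeriv 2 f z / deriv f z) = φ (u z))
    (hgv : ∀ w ∈ ball (0:ℂ) 1, w ≠ 0 →
      (1 - (α : ℂ)) * (w * deriv g w / g w)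
        + (α : ℂ) * (1 + w * iteratedDeriv 2 g w / deriv g w) = φ (v w))
    (hne : B₁ ^ 2 + (1 + α) * (B₁ - B₂) ≠ 0) :
    ‖tc f 2‖ ≤ B₁ * Real.sqrt B₁ /
      Real.sqrt ((1 + α) * |B₁ ^ 2 + (1 + α) * (B₁ - B₂)|) :=
  stmt14_general f g u v φ α B₁ B₂ hα hf hf0 hf1 hg hinv hu humap hu0 hv hvmap hv0 hφ hφ0 hB₁ hB₂
    hB₁pos hfu hgv hne
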